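/- Let L = {g ∈ Γ′ : π_g = 1 and g_1 ∈ Γ′ and g_2 ∈ Γ′} (the preimage of Γ′ × Γ′ under the wreath decomposition). Then L is a normal subgroup of Γ′ and the quotient Γ′/L is infinite cyclic, generated by the image of the commutator c = [a,b] = a⁻¹b⁻¹ab. -/

import Mathlib

namespace PinkGroup

mutual
  /-- forward action of the generator `a` -/
  def aF : List Bool → List Bool
    | [] => []
    | false :: w => true :: bF w
    | true :: w => false :: w
  /-- forward action of the generator `b` -/
  def bF : List Bool → List Bool
    | [] => []
    | false :: w => false :: aF w
    | true :: w => true :: w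
end

mutual
  /-- inverse of `aF` -/
  def aIF : List Bool → List Bool
    | [] => []
    | true :: w => false :: bIF w
    | false :: w => true :: w
  /-- inverse of `bF` -/
  def bIF : List Bool → List Bool
    | [] => []
    | false :: w => false :: aIF w
    | true :: w => true :: w
end

lemma inv_all (w : List Bool) :
    aF (aIF w) = w ∧ bF (bIF w) = w ∧ aIF (aF w) = w ∧ bIF (bF w) = w := by
  induction w with
  | nil => simp [aF, bF, aIF, bIF]
  | cons x w ih =>
    cases x <;>
      simp [aF, bF, aIF, bIF, ih.1, ih.2.1, ih.2.2.1, ih.2.2.2]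

/-- The generator `a` of Pink's group: `(1w)^a = 2 w^b`, `(2w)^a = 1w`
(where the letter `1` is `false` and the letter `2` is `true`). -/
def a : Equiv.Perm (List Bool) :=
  ⟨aF, aIF, fun w => (inv_all w).2.2.1, fun w => (inv_all w).1⟩

/-- The generator `b` of Pink's group: `(1w)^b = 1 w^a`, `(2w)^b = 2w`. -/
def b : Equiv.Perm (List Bool) :=
  ⟨bF, bIF, fun w => (inv_all w).2.2.2, fun w => (inv_all w).2.1⟩

/-- Pink's group `Γ`, the iterated monodromy group of `z^2 - 1`. -/
def Gam : Subgroup (Equiv.Perm (List Bool)) := Subgroup.closure {a, b}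

lemma a_mem : a ∈ Gam := Subgroup.subset_closure (by simp)

lemma b_mem : b ∈ Gam := Subgroup.subset_closure (by simp)


/-- The derived subgroup `Γ'` of `Γ`, as a subgroup of the permutation group. -/
def GamDer : Subgroup (Equiv.Perm (List Bool)) := ⁅Gam, Gam⁆

/-- The subgroup `L = {g ∈ Γ' : π_g = 1, g₁ ∈ Γ', g₂ ∈ Γ'}`, the preimage of `Γ' × Γ'`
under the wreath decomposition: `g ∈ L` iff `g(xw) = x (k_x w)` for sections `k_x ∈ Γ'`. -/
def Lsub : Subgroup ↥GamDer where
  carrier := {g | ∀ x : Bool, ∃ k ∈ GamDer,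
    ∀ w : List Bool, (g : Equiv.Perm (List Bool)) (x :: w) = x :: k w}
  one_mem' := fun x => ⟨1, one_mem _, fun w => by simp⟩
  mul_mem' := by
    intro g h hg hh x
    obtain ⟨kg, hkgK, hkg⟩ := hg x
    obtain ⟨kh, hkhK, hkh⟩ := hh x
    exact ⟨kg * kh, mul_mem hkgK hkhK, fun w => by
      rw [Subgroup.coe_mul, Equiv.Perm.mul_apply, hkh w, hkg (kh w), Equiv.Perm.mul_apply]⟩
  inv_mem' := by
    intro g hg x
    obtain ⟨k, hkK, hk⟩ := hg x
    refine ⟨k⁻¹, inv_mem hkK, fun w => ?_⟩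
    have h1 : (g : Equiv.Perm (List Bool)) (x :: k⁻¹ w) = x :: w := by
      rw [hk, ← Equiv.Perm.mul_apply, mul_inv_cancel, Equiv.Perm.one_apply]
    rw [← h1]
    simp

/-- `c = [a,b] = a⁻¹b⁻¹ab` (the paper's commutator convention). -/
def cc : Equiv.Perm (List Bool) := a⁻¹ * b⁻¹ * a * b

lemma cc_mem_GamDer : cc ∈ GamDer := by
  have h := Subgroup.commutator_mem_commutator (inv_mem a_mem) (inv_mem b_mem)
  simpa [GamDer, cc, commutatorElement_def, mul_assoc] using h

end PinkGroup

/-!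
Wreath recursion embeds `Γ` in `Γ ≀ C₂`: `a` swaps the two subtrees with sections `b` and `1`, and
`b = (a, 1)`. Three maps out of `Γ` kill `Γ'`: the root permutation and the product of the classes
of the two sections in `Γᵃᵇ` (both have abelian targets), and the induced map to
`(Γᵃᵇ/⟨ā⟩) ≀ C₂`, whose image is cyclic because `b` goes to `1`. So every `g ∈ Γ'` fixes the first
level and its sections have classes `ā^k` and `ā^(-k)`, with `g ∈ L` iff `ā^k = 1`.

To see that `ā` has infinite order, apply the same three maps to a relation `ā^m b̄^n = 1`: it
stays a relation after swapping `m` and `n`, `m` is even, and `a^(2m') b^n = (b^m' a^n, b^m')`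
yields a relation `ā^k b̄^m' = 1`. Hence `m` and `n` are divisible by every power of `2`. So
`g ↦ k` is a homomorphism `Γ' → ℤ` with kernel `L`, and it sends `c = (a, a⁻¹)` to `1`.
-/

open Equiv Multiplicative RegularWreathProduct

namespace RegularWreathProduct

variable {D E Q : Type*} [Group D] [Group E] [Group Q]

def ofLeft : (Q → D) →* D ≀ᵣ Q where
  toFun k := ⟨k, 1⟩
  map_one' := rfl
  map_mul' _ _ := by ext <;> simp

@[simp] lemma ofLeft_left (k : Q → D) : (ofLeft k).left = k := rfl

@[simp] lemma ofLeft_right (k : Q → D) : (ofLeft k).right = 1 := rfl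

def leftHom : (rightHom : D ≀ᵣ Q →* Q).ker →* (Q → D) where
  toFun p := p.1.left
  map_one' := rfl
  map_mul' p q := by
    have hp : p.1.right = 1 := p.2
    ext x
    simp [hp]

def map (f : D →* E) : D ≀ᵣ Q →* E ≀ᵣ Q where
  toFun p := ⟨f ∘ p.left, p.right⟩
  map_one' := by ext <;> simp
  map_mul' _ _ := by ext <;> simp

@[simp] lemma map_left (f : D →* E) (p : D ≀ᵣ Q) : (map f p).left = f ∘ p.left := rfl

@[simp] lemma map_right (f : D →* E) (p : D ≀ᵣ Q) : (map f p).right = p.right := rfl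

def prodLeft {M : Type*} [CommGroup M] [Fintype Q] (f : D →* M) : D ≀ᵣ Q →* M where
  toFun p := ∏ x, f (p.left x)
  map_one' := by simp
  map_mul' p q := by
    simp only [mul_left, Pi.mul_apply, map_mul, Finset.prod_mul_distrib]
    congr 1
    exact Fintype.prod_equiv (Equiv.mulLeft p.right⁻¹) _ _ fun _ => rfl

@[simp] lemma prodLeft_apply {M : Type*} [CommGroup M] [Fintype Q] (f : D →* M) (p : D ≀ᵣ Q) :
    prodLeft f p = ∏ x, f (p.left x) := rfl

end RegularWreathProduct

lemma commutator_le_ker_of_map_eq_one {G H : Type*} [Group G] [Group H] {a b : G}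
    (hab : Subgroup.closure {a, b} = ⊤) (f : G →* H) (hb : f b = 1) : commutator G ≤ f.ker := by
  have hrange : f.range = Subgroup.zpowers (f a) := by
    rw [MonoidHom.range_eq_map, ← hab, MonoidHom.map_closure, Set.image_pair, hb, Set.pair_comm,
      Subgroup.closure_insert_one, Subgroup.zpowers_eq_closure]
  rw [commutator_def, Subgroup.commutator_le]
  intro x _ y _
  obtain ⟨m, hm⟩ := Subgroup.mem_zpowers_iff.1 (hrange ▸ ⟨x, rfl⟩ : f x ∈ Subgroup.zpowers (f a))
  obtain ⟨n, hn⟩ := Subgroup.mem_zpowers_iff.1 (hrange ▸ ⟨y, rfl⟩ : f y ∈ Subgroup.zpowers (f a))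
  rw [MonoidHom.mem_ker, map_commutatorElement, ← hm, ← hn, commutatorElement_eq_one_iff_commute]
  exact Commute.zpow_zpow_self _ _ _

lemma Abelianization.of_eq_one_iff {G : Type*} [Group G] {u : G} :
    Abelianization.of u = 1 ↔ u ∈ commutator G := by
  rw [← MonoidHom.mem_ker, Abelianization.ker_of]

namespace PinkGroup

section WreathRecursion

variable {H : Subgroup (Perm (List Bool))}

/-- Letters are added in `Bool ≅ ZMod 2` (`+` is `xor`). Unlike the paper's `(xw)^g = x^π w^(g_x)`,
the section `p.left y` is indexed by the image letter `y`, which is the convention that makes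
`Decomposes` multiplicative for the product of `RegularWreathProduct`. -/
def Decomposes (g : Perm (List Bool)) (p : H ≀ᵣ Multiplicative Bool) : Prop :=
  ∀ x w, g (x :: w) = (p.right * ofAdd x).toAdd :: (p.left (p.right * ofAdd x) : Perm _) w

lemma Decomposes.unique {g : Perm (List Bool)} {p q : H ≀ᵣ Multiplicative Bool}
    (hp : Decomposes g p) (hq : Decomposes g q) : p = q := by
  have hright : p.right = q.right := by
    simpa using congrArg List.head? ((hp false []).symm.trans (hq false []))
  refine RegularWreathProduct.ext (funext fun y => Subtype.ext (Equiv.ext fun w => ?_)) hright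
  have h := (hp (p.right⁻¹ * y).toAdd w).symm.trans (hq (p.right⁻¹ * y).toAdd w)
  rw [← hright] at h
  simpa using h

lemma decomposes_one : Decomposes (1 : Perm (List Bool)) (1 : H ≀ᵣ Multiplicative Bool) :=
  fun _ _ => by simp

lemma Decomposes.mul {g h : Perm (List Bool)} {p q : H ≀ᵣ Multiplicative Bool}
    (hp : Decomposes g p) (hq : Decomposes h q) : Decomposes (g * h) (p * q) := by
  intro x w
  rw [Perm.mul_apply, hq, hp]
  simp [mul_assoc]

lemma Decomposes.inv {g : Perm (List Bool)} {p : H ≀ᵣ Multiplicative Bool}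
    (hp : Decomposes g p) : Decomposes g⁻¹ p⁻¹ := by
  intro x w
  apply g.injective
  rw [← Perm.mul_apply, mul_inv_cancel, Perm.one_apply, hp]
  simp

variable (H) in
def decomposable : Subgroup (Perm (List Bool)) where
  carrier := {g | ∃ p : H ≀ᵣ Multiplicative Bool, Decomposes g p}
  one_mem' := ⟨1, decomposes_one⟩
  mul_mem' := by
    rintro g h ⟨p, hp⟩ ⟨q, hq⟩
    exact ⟨p * q, hp.mul hq⟩
  inv_mem' := by
    rintro g ⟨p, hp⟩
    exact ⟨p⁻¹, hp.inv⟩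

variable (H) in
noncomputable def wreathRecursion : decomposable H →* H ≀ᵣ Multiplicative Bool where
  toFun g := g.2.choose
  map_one' := (decomposable H).one_mem.choose_spec.unique decomposes_one
  map_mul' g h := (g * h).2.choose_spec.unique (g.2.choose_spec.mul h.2.choose_spec)

lemma decomposes_wreathRecursion (g : decomposable H) : Decomposes g (wreathRecursion H g) :=
  g.2.choose_spec

lemma wreathRecursion_eq {g : decomposable H} {p : H ≀ᵣ Multiplicative Bool}
    (hp : Decomposes g p) : wreathRecursion H g = p :=
  (decomposes_wreathRecursion g).unique hp

end WreathRecursion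

def aG : Gam := ⟨a, a_mem⟩

def bG : Gam := ⟨b, b_mem⟩

lemma closure_aG_bG : Subgroup.closure {aG, bG} = ⊤ := by
  apply Subgroup.map_injective Gam.subtype_injective
  rw [MonoidHom.map_closure, Set.image_pair, ← MonoidHom.range_eq_map, Subgroup.range_subtype]
  rfl

lemma decomposes_a : Decomposes a ⟨Pi.mulSingle (ofAdd true) bG, ofAdd true⟩ := by
  rintro (_ | _) w <;> rfl

lemma decomposes_b : Decomposes b ⟨Pi.mulSingle 1 aG, 1⟩ := by
  rintro (_ | _) w <;> rfl

lemma Gam_le_decomposable : Gam ≤ decomposable Gam := by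
  rw [Gam, Subgroup.closure_le, Set.insert_subset_iff, Set.singleton_subset_iff]
  exact ⟨⟨_, decomposes_a⟩, ⟨_, decomposes_b⟩⟩

noncomputable def psi : Gam →* Gam ≀ᵣ Multiplicative Bool :=
  (wreathRecursion Gam).comp (Subgroup.inclusion Gam_le_decomposable)

lemma decomposes_psi (u : Gam) : Decomposes (u : Perm (List Bool)) (psi u) :=
  decomposes_wreathRecursion (Subgroup.inclusion Gam_le_decomposable u)

lemma psi_aG : psi aG = ⟨Pi.mulSingle (ofAdd true) bG, ofAdd true⟩ :=
  wreathRecursion_eq decomposes_a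

lemma psi_bG : psi bG = ofLeft (Pi.mulSingle 1 aG) :=
  wreathRecursion_eq decomposes_b

lemma psi_aG_sq : psi (aG ^ 2) = ofLeft fun _ => bG := by
  rw [map_pow, pow_two, psi_aG]
  refine RegularWreathProduct.ext (funext fun y => ?_) rfl
  cases y with
  | ofAdd x => cases x <;> simp +decide [Pi.mulSingle_apply]

open Abelianization

lemma psi_right_eq_one {u : Gam} (hu : u ∈ commutator Gam) : (psi u).right = 1 :=
  commutator_subset_ker (rightHom.comp psi) hu

lemma prod_of_psi_left_eq_one {u : Gam} (hu : u ∈ commutator Gam) :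
    ∏ y, of ((psi u).left y) = 1 :=
  commutator_subset_ker ((prodLeft of).comp psi) hu

lemma of_psi_left_mem_zpowers {u : Gam} (hu : u ∈ commutator Gam) (y : Multiplicative Bool) :
    of ((psi u).left y) ∈ Subgroup.zpowers (of aG) := by
  set q := (QuotientGroup.mk' (Subgroup.zpowers (of aG))).comp of
  have hqa : q aG = 1 := (QuotientGroup.eq_one_iff _).2 (Subgroup.mem_zpowers _)
  have hb : (RegularWreathProduct.map q).comp psi bG = 1 := by
    ext y
    · simp [psi_bG, Pi.mulSingle_apply, apply_ite, hqa]
    · simp [psi_bG]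
  have hu' := commutator_le_ker_of_map_eq_one closure_aG_bG _ hb hu
  rw [MonoidHom.mem_ker] at hu'
  simpa [q] using congrFun (congrArg RegularWreathProduct.left hu') y

def IsRelation (m n : ℤ) : Prop := of aG ^ m * of bG ^ n = 1

lemma IsRelation.swap {m n : ℤ} (h : IsRelation m n) : IsRelation n m := by
  have := congrArg (lift ((prodLeft of).comp psi)) h
  simp only [map_mul, map_zpow, lift_apply_of, MonoidHom.coe_comp, Function.comp_apply,
    prodLeft_apply, psi_aG, psi_bG, ofLeft_left, Pi.mulSingle_apply, apply_ite, map_one,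
    Finset.prod_ite_eq', Finset.mem_univ, if_true] at this
  rwa [IsRelation, mul_comm]

lemma IsRelation.two_dvd_left {m n : ℤ} (h : IsRelation m n) : 2 ∣ m := by
  have := congrArg (lift (rightHom.comp psi)) h
  simp only [map_mul, map_zpow, lift_apply_of, MonoidHom.coe_comp, Function.comp_apply,
    rightHom_eq_right, psi_aG, psi_bG, ofLeft_right, one_zpow, mul_one, map_one] at this
  have horder : orderOf (ofAdd true : Multiplicative Bool) = 2 := orderOf_eq_prime rfl (by decide)
  exact_mod_cast horder ▸ orderOf_dvd_iff_zpow_eq_one.2 this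

lemma IsRelation.exists_of_two_mul {m n : ℤ} (h : IsRelation (2 * m) n) :
    ∃ k, IsRelation k m := by
  have hu : aG ^ (2 * m) * bG ^ n ∈ commutator Gam :=
    of_eq_one_iff.1 (by simpa [IsRelation] using h)
  have hpsi : psi (aG ^ (2 * m) * bG ^ n) = ofLeft ((fun _ => bG) ^ m * Pi.mulSingle 1 aG ^ n) := by
    simp [zpow_mul, psi_aG_sq, psi_bG]
  have hmem := of_psi_left_mem_zpowers hu 1
  rw [hpsi, ofLeft_left, Pi.mul_apply, Pi.pow_apply, Pi.pow_apply, Pi.mulSingle_eq_same,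
    map_mul, map_zpow, map_zpow] at hmem
  obtain ⟨k, hk⟩ := Subgroup.mem_zpowers_iff.1
    ((Subgroup.mul_mem_cancel_right _ (zpow_mem (Subgroup.mem_zpowers _) n)).1 hmem)
  exact ⟨-k, by rw [IsRelation, ← hk, zpow_neg, inv_mul_cancel]⟩

lemma IsRelation.two_pow_dvd_right (s : ℕ) {m n : ℤ} (h : IsRelation m n) : 2 ^ s ∣ n := by
  induction s generalizing m n with
  | zero => exact one_dvd n
  | succ s ih =>
    obtain ⟨n', rfl⟩ := h.swap.two_dvd_left
    obtain ⟨k, hk⟩ := h.swap.exists_of_two_mul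
    rw [pow_succ']
    exact mul_dvd_mul_left 2 (ih hk)

lemma zpowersHom_of_aG_injective : Function.Injective (zpowersHom _ (of aG)) := by
  refine (injective_iff_map_eq_one _).2 fun m hm => congrArg ofAdd ?_
  have hrel : IsRelation 0 m.toAdd := IsRelation.swap (by simpa [IsRelation] using hm)
  refine Int.eq_zero_of_dvd_of_natAbs_lt_natAbs (hrel.two_pow_dvd_right m.toAdd.natAbs) ?_
  rw [Int.natAbs_pow]
  exact Nat.lt_two_pow_self

lemma map_subtype_commutator_Gam : (commutator Gam).map Gam.subtype = GamDer := by
  rw [commutator_def, Subgroup.map_commutator, ← MonoidHom.range_eq_map, Subgroup.range_subtype]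
  rfl

lemma GamDer_le_Gam : GamDer ≤ Gam :=
  map_subtype_commutator_Gam ▸ Subgroup.map_subtype_le _

lemma coe_mem_GamDer_iff {u : Gam} : (u : Perm (List Bool)) ∈ GamDer ↔ u ∈ commutator Gam := by
  rw [← map_subtype_commutator_Gam]
  exact Subgroup.mem_map_iff_mem Gam.subtype_injective

lemma inclusion_mem_commutator (g : GamDer) :
    Subgroup.inclusion GamDer_le_Gam g ∈ commutator Gam :=
  coe_mem_GamDer_iff.1 g.2

noncomputable def derivedSections : GamDer →* (Multiplicative Bool → Gam) :=
  leftHom.comp ((psi.comp (Subgroup.inclusion GamDer_le_Gam)).codRestrict _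
    fun g => psi_right_eq_one (inclusion_mem_commutator g))

lemma derivedSections_apply (g : GamDer) (y : Multiplicative Bool) :
    derivedSections g y = (psi (Subgroup.inclusion GamDer_le_Gam g)).left y := rfl

lemma apply_cons_eq_derivedSections (g : GamDer) (x : Bool) (w : List Bool) :
    (g : Perm (List Bool)) (x :: w) = x :: (derivedSections g (ofAdd x) : Perm (List Bool)) w := by
  have h := decomposes_psi (Subgroup.inclusion GamDer_le_Gam g) x w
  rwa [psi_right_eq_one (inclusion_mem_commutator g), one_mul] at h

lemma of_derivedSections_mul_eq_one (g : GamDer) :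
    of (derivedSections g 1) * of (derivedSections g (ofAdd true)) = 1 := by
  have h : ∏ y, of (derivedSections g y) = 1 :=
    prod_of_psi_left_eq_one (inclusion_mem_commutator g)
  rwa [Fintype.prod_equiv toAdd (fun y => of (derivedSections g y))
    (fun x => of (derivedSections g (ofAdd x))) (fun _ => rfl), Fintype.prod_bool, mul_comm] at h

lemma mem_Lsub_iff (g : GamDer) : g ∈ Lsub ↔ ∀ y, of (derivedSections g y) = 1 := by
  refine ⟨fun h y => ?_, fun h x => ?_⟩
  · obtain ⟨k, hk, hgk⟩ := h y.toAdd
    have hsec : (derivedSections g y : Perm (List Bool)) = k := Equiv.ext fun w =>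
      List.cons_injective ((apply_cons_eq_derivedSections g y.toAdd w).symm.trans (hgk w))
    exact of_eq_one_iff.2 (coe_mem_GamDer_iff.1 (hsec ▸ hk))
  · exact ⟨_, coe_mem_GamDer_iff.2 (of_eq_one_iff.1 (h (ofAdd x))),
      apply_cons_eq_derivedSections g x⟩

noncomputable def firstSectionClass : GamDer →* Abelianization Gam :=
  (of.comp (Pi.evalMonoidHom (fun _ => Gam) 1)).comp derivedSections

lemma firstSectionClass_eq_one_iff (g : GamDer) : firstSectionClass g = 1 ↔ g ∈ Lsub := by
  rw [mem_Lsub_iff]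
  refine ⟨fun h y => ?_, fun h => h 1⟩
  change of (derivedSections g 1) = 1 at h
  cases y with
  | ofAdd x =>
    cases x
    · exact h
    · simpa [h] using of_derivedSections_mul_eq_one g

noncomputable def phi : GamDer →* Multiplicative ℤ :=
  (MonoidHom.ofInjective zpowersHom_of_aG_injective).symm.toMonoidHom.comp
    (firstSectionClass.codRestrict _ fun g =>
      of_psi_left_mem_zpowers (inclusion_mem_commutator g) 1)

lemma ker_phi : phi.ker = Lsub := by
  ext g
  rw [MonoidHom.mem_ker, ← firstSectionClass_eq_one_iff, phi, MonoidHom.comp_apply,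
    MulEquiv.coe_toMonoidHom, MulEquiv.map_eq_one_iff, ← OneMemClass.coe_eq_one]
  rfl

lemma phi_cc : phi ⟨cc, cc_mem_GamDer⟩ = ofAdd 1 := by
  have hcc : Subgroup.inclusion GamDer_le_Gam ⟨cc, cc_mem_GamDer⟩ = aG⁻¹ * bG⁻¹ * aG * bG := rfl
  have hsec : firstSectionClass ⟨cc, cc_mem_GamDer⟩ = of aG := by
    simp [firstSectionClass, derivedSections_apply, hcc, psi_aG, psi_bG]
  rw [phi, MonoidHom.comp_apply, MulEquiv.coe_toMonoidHom, MulEquiv.symm_apply_eq]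
  exact Subtype.ext (hsec.trans (by simp [MonoidHom.ofInjective_apply]))

/-- `L` is a normal subgroup of `Γ'`, and `Γ'/L` is infinite cyclic generated
by the image of `c = [a,b]` (expressed by a surjection `Γ' → ℤ` with kernel `L`
sending `c` to `1`). -/
theorem GamDer_quotient_infinite_cyclic :
    Lsub.Normal ∧
    ∃ φ : ↥GamDer →* Multiplicative ℤ, Function.Surjective φ ∧
      MonoidHom.ker φ = Lsub ∧ φ ⟨cc, cc_mem_GamDer⟩ = Multiplicative.ofAdd 1 := by
  refine ⟨ker_phi ▸ phi.normal_ker, phi, fun z => ⟨⟨cc, cc_mem_GamDer⟩ ^ z.toAdd, ?_⟩, ker_phi,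
    phi_cc⟩
  rw [map_zpow, phi_cc, ← ofAdd_zsmul, smul_eq_mul, mul_one, ofAdd_toAdd]

end PinkGroup
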